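/- arXiv:2202.00810 — 6 statements merged into one kernel-verified Lean document; each statement's English description precedes it below -/
import Mathlib

section
/- Let X and Y be real Hilbert spaces, A and A^η bounded linear operators from X to Y with ‖A^η − A‖ ≤ η in operator norm, g ∈ Y and g^δ ∈ Y with ‖g − g^δ‖ ≤ δ, and let z ∈ X satisfy A z = g and ‖z‖ ≤ ρ. Then for every x ∈ X, setting w := A^η x − g^δ, one has |⟪(A^η)* w, z⟫ − ⟪w, g^δ⟫| ≤ (ρη + δ)‖w‖; that is, z belongs to the stripe H((A^η)* w, ⟪w, g^δ⟫, (ρη + δ)‖w‖). -/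
open scoped RealInnerProductSpace

/-- If `‖Aη - A‖ ≤ η`, `‖g - gδ‖ ≤ δ`, `A z = g` and `‖z‖ ≤ ρ`, then for
every `x`, with `w := Aη x - gδ`, the solution `z` lies in the stripe
`H((Aη)* w, ⟪w, gδ⟫, (ρη + δ)‖w‖)`, i.e.
`|⟪(Aη)* w, z⟫ - ⟪w, gδ⟫| ≤ (ρη + δ)‖w‖`. -/
theorem solution_in_stripe
    {X Y : Type*} [NormedAddCommGroup X] [InnerProductSpace ℝ X] [CompleteSpace X]
    [NormedAddCommGroup Y] [InnerProductSpace ℝ Y] [CompleteSpace Y]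
    (A Aη : X →L[ℝ] Y) (η δ ρ : ℝ) (hη : ‖Aη - A‖ ≤ η)
    (g gδ : Y) (hδ : ‖g - gδ‖ ≤ δ)
    (z : X) (hz : A z = g) (hρ : ‖z‖ ≤ ρ) (x : X) :
    |⟪Aη.adjoint (Aη x - gδ), z⟫ - ⟪Aη x - gδ, gδ⟫| ≤ (ρ * η + δ) * ‖Aη x - gδ‖ := by
  set w := Aη x - gδ with hw
  have key : ⟪Aη.adjoint w, z⟫ - ⟪w, gδ⟫ = ⟪w, (Aη - A) z + (g - gδ)⟫ := by
    rw [ContinuousLinearMap.adjoint_inner_left]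
    simp [inner_add_right, inner_sub_right, hz, ContinuousLinearMap.sub_apply]
  rw [key]
  calc |⟪w, (Aη - A) z + (g - gδ)⟫| ≤ ‖w‖ * ‖(Aη - A) z + (g - gδ)‖ :=
        abs_real_inner_le_norm _ _
    _ ≤ ‖w‖ * (η * ρ + δ) := by
        apply mul_le_mul_of_nonneg_left _ (norm_nonneg _)
        calc ‖(Aη - A) z + (g - gδ)‖ ≤ ‖(Aη - A) z‖ + ‖g - gδ‖ := norm_add_le _ _
          _ ≤ ‖Aη - A‖ * ‖z‖ + δ := add_le_add ((Aη - A).le_opNorm z) hδ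
          _ ≤ η * ρ + δ := by
              have h0 : (0:ℝ) ≤ ‖z‖ := norm_nonneg _
              have h1 : (0:ℝ) ≤ ‖Aη - A‖ := norm_nonneg _
              nlinarith
    _ = (ρ * η + δ) * ‖w‖ := by ring
end

section
/- Let X and Y be real Hilbert spaces, A : X → Y a bounded linear operator, (X_j)_{j∈ℕ} a sequence of closed subspaces of X with X_j ⊆ X_{j+1} for all j, and g ∈ Y such that there exists x' ∈ X₀ with A x' = g. For each j let M_j := {f ∈ X_j : A f = g} (a nonempty closed affine subset of X, and M_j ⊆ M_{j+1}), and let V denote the closure of ∪_{j∈ℕ} M_j (a closed affine subset of X). If (x_j)_{j∈ℕ} is a sequence in X converging to x ∈ X, then the metric projections satisfy P_{M_j} x_j → P_V x as j → ∞. -/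
/-!
The limit `q` is the nearest point to `xlim` of the closed convex set `V`, and every `p j` lies in
`V`; by the variational inequality for `q`, `‖p j - q‖² ≤ ‖xlim - p j‖² - ‖xlim - q‖²`, so it
suffices that `‖xlim - p j‖ → ‖xlim - q‖`. That is a purely metric fact: `p j` is nearest to
`x j` in `M j`, the sets `M j` increase, and `q` is approximated by points of some `M k`.
-/

open Filter Topology

section NearestPoints

variable {α : Type*} [PseudoMetricSpace α] {M : ℕ → Set α} {x p : ℕ → α} {y q : α}

theorem eventually_dist_lt_of_mem_closure_iUnion (hM : Monotone M)
    (hx : Tendsto x atTop (𝓝 y)) (hpmin : ∀ j, ∀ z ∈ M j, dist (x j) (p j) ≤ dist (x j) z)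
    (hq : q ∈ closure (⋃ j, M j)) {a : ℝ} (ha : dist y q < a) :
    ∀ᶠ j in atTop, dist y (p j) < a := by
  set δ := (a - dist y q) / 3 with hδ_def
  have hδ : 0 < δ := by linarith
  obtain ⟨z, hzM, hqz⟩ := Metric.mem_closure_iff.1 hq δ hδ
  obtain ⟨k, hzk⟩ := Set.mem_iUnion.1 hzM
  filter_upwards [Metric.tendsto_nhds.1 hx δ hδ, eventually_ge_atTop k] with j hxj hjk
  calc dist y (p j) ≤ dist y (x j) + dist (x j) (p j) := dist_triangle _ _ _
    _ ≤ dist y (x j) + dist (x j) z := by gcongr; exact hpmin j z (hM hjk hzk)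
    _ ≤ dist y (x j) + (dist (x j) y + dist y q + dist q z) := by
        gcongr; exact dist_triangle4 _ _ _ _
    _ < a := by linarith [dist_comm y (x j)]

theorem tendsto_dist_of_mem_closure_iUnion (hM : Monotone M)
    (hx : Tendsto x atTop (𝓝 y)) (hp : ∀ j, p j ∈ M j)
    (hpmin : ∀ j, ∀ z ∈ M j, dist (x j) (p j) ≤ dist (x j) z)
    (hq : q ∈ closure (⋃ j, M j)) (hqmin : ∀ z ∈ closure (⋃ j, M j), dist y q ≤ dist y z) :
    Tendsto (fun j => dist y (p j)) atTop (𝓝 (dist y q)) := by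
  refine tendsto_order.2 ⟨fun a ha => Eventually.of_forall fun j => ?_,
    fun a ha => eventually_dist_lt_of_mem_closure_iUnion hM hx hpmin hq ha⟩
  exact ha.trans_le (hqmin _ (subset_closure (Set.mem_iUnion_of_mem j (hp j))))

end NearestPoints

section ConvexMinimizer

variable {E : Type*} [NormedAddCommGroup E] [InnerProductSpace ℝ E] {V : Set E} {y q : E}

theorem norm_sub_sq_le_of_forall_norm_sub_le (hV : Convex ℝ V) (hq : q ∈ V)
    (hqmin : ∀ z ∈ V, ‖y - q‖ ≤ ‖y - z‖) {p : E} (hp : p ∈ V) :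
    ‖p - q‖ ^ 2 ≤ ‖y - p‖ ^ 2 - ‖y - q‖ ^ 2 := by
  have hinf : ‖y - q‖ = ⨅ w : V, ‖y - w‖ :=
    (IsLeast.csInf_eq (s := Set.range fun w : V => ‖y - w‖) ⟨⟨⟨q, hq⟩, rfl⟩, by rintro _ ⟨w, rfl⟩; exact hqmin w w.2⟩).symm
  have hinner : inner ℝ (y - q) (p - q) ≤ 0 :=
    (norm_eq_iInf_iff_real_inner_le_zero hV hq).1 hinf p hp
  have hexpand : ‖y - p‖ ^ 2 = ‖y - q‖ ^ 2 - 2 * inner ℝ (y - q) (p - q) + ‖p - q‖ ^ 2 := by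
    rw [← norm_sub_sq_real, sub_sub_sub_cancel_right]
  linarith

theorem tendsto_of_tendsto_norm_sub_of_forall_norm_sub_le {ι : Type*} {l : Filter ι} {p : ι → E}
    (hV : Convex ℝ V) (hq : q ∈ V) (hqmin : ∀ z ∈ V, ‖y - q‖ ≤ ‖y - z‖) (hp : ∀ i, p i ∈ V)
    (hlim : Tendsto (fun i => ‖y - p i‖) l (𝓝 ‖y - q‖)) :
    Tendsto p l (𝓝 q) := by
  have hsq : Tendsto (fun i => ‖y - p i‖ ^ 2 - ‖y - q‖ ^ 2) l (𝓝 0) := by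
    rw [← sub_self (‖y - q‖ ^ 2)]
    exact (hlim.pow 2).sub_const _
  have hdist : Tendsto (fun i => ‖p i - q‖ ^ 2) l (𝓝 0) :=
    squeeze_zero (fun i => sq_nonneg _)
      (fun i => norm_sub_sq_le_of_forall_norm_sub_le hV hq hqmin (hp i)) hsq
  rw [tendsto_iff_norm_sub_tendsto_zero]
  simpa [Real.sqrt_sq (norm_nonneg _)] using hdist.sqrt

end ConvexMinimizer

theorem projections_onto_nested_solution_sets_converge_general
    {X Y : Type*} [NormedAddCommGroup X] [InnerProductSpace ℝ X]
    [NormedAddCommGroup Y] [InnerProductSpace ℝ Y]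
    (A : X →L[ℝ] Y)
    (Xs : ℕ → Submodule ℝ X) (hmono : ∀ j, Xs j ≤ Xs (j + 1))
    (g : Y)
    (M : ℕ → Set X) (hM : ∀ j, M j = {f : X | f ∈ Xs j ∧ A f = g})
    (V : Set X) (hV : V = closure (⋃ j, M j))
    (x : ℕ → X) (xlim : X) (hx : Tendsto x atTop (nhds xlim))
    (p : ℕ → X) (hp : ∀ j, p j ∈ M j)
    (hpproj : ∀ j, ∀ z ∈ M j, ‖x j - p j‖ ≤ ‖x j - z‖)
    (q : X) (hq : q ∈ V) (hqproj : ∀ z ∈ V, ‖xlim - q‖ ≤ ‖xlim - z‖) :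
    Tendsto p atTop (nhds q) := by
  subst hV
  have hMmono : Monotone M := monotone_nat_of_le_succ fun j f hf => by
    rw [hM] at hf ⊢
    exact ⟨hmono j hf.1, hf.2⟩
  have hMconv : ∀ j, Convex ℝ (M j) := fun j => by
    rw [hM]
    exact (Xs j).convex.inter ((convex_singleton g).linear_preimage A.toLinearMap)
  have hVconv : Convex ℝ (closure (⋃ j, M j)) :=
    (hMmono.directed_le.convex_iUnion fun j => hMconv j).closure
  refine tendsto_of_tendsto_norm_sub_of_forall_norm_sub_le hVconv hq hqproj
    (fun j => subset_closure (Set.mem_iUnion_of_mem j (hp j))) ?_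
  simpa only [dist_eq_norm] using tendsto_dist_of_mem_closure_iUnion hMmono hx hp
    (by simpa only [dist_eq_norm] using hpproj) hq (by simpa only [dist_eq_norm] using hqproj)

/-- Let `A : X →L[ℝ] Y` be bounded linear between real Hilbert spaces,
`(Xs j)` a nested sequence of closed subspaces, and `g ∈ Y` with a solution `x' ∈ Xs 0`.
Let `M j := {f ∈ Xs j : A f = g}` and `V` the closure of `⋃ j, M j`. If `x j → x`, then
the metric projections `p j` of `x j` onto `M j` converge to the metric projection `q` of
`x` onto `V`. -/
theorem projections_onto_nested_solution_sets_converge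
    {X Y : Type*} [NormedAddCommGroup X] [InnerProductSpace ℝ X] [CompleteSpace X]
    [NormedAddCommGroup Y] [InnerProductSpace ℝ Y] [CompleteSpace Y]
    (A : X →L[ℝ] Y)
    (Xs : ℕ → Submodule ℝ X) (hmono : ∀ j, Xs j ≤ Xs (j + 1))
    (hclosed : ∀ j, IsClosed (Xs j : Set X))
    (g : Y) (x' : X) (hx'mem : x' ∈ Xs 0) (hx'sol : A x' = g)
    (M : ℕ → Set X) (hM : ∀ j, M j = {f : X | f ∈ Xs j ∧ A f = g})
    (V : Set X) (hV : V = closure (⋃ j, M j))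
    (x : ℕ → X) (xlim : X) (hx : Tendsto x atTop (nhds xlim))
    (p : ℕ → X) (hp : ∀ j, p j ∈ M j)
    (hpproj : ∀ j, ∀ z ∈ M j, ‖x j - p j‖ ≤ ‖x j - z‖)
    (q : X) (hq : q ∈ V) (hqproj : ∀ z ∈ V, ‖xlim - q‖ ≤ ‖xlim - z‖) :
    Tendsto p atTop (nhds q) :=
  projections_onto_nested_solution_sets_converge_general A Xs hmono g M hM V hV x xlim hx p hp
    hpproj q hq hqproj
end

section
/- Let X be a real Hilbert space and Y a finite-dimensional real Hilbert space, A : X → Y a bounded linear operator, and (X_j)_{j∈ℕ} a sequence of closed subspaces of X with X_j ⊆ X_{j+1} for all j, with (ker A)^⊥ ⊆ closure(∪_{j∈ℕ} X_j), and such that for every j the restriction of A to X_j is surjective onto Y. Let g ∈ Y. For each j let f_j⁺ denote the unique minimum-norm element of the nonempty closed affine set {f ∈ X_j : A f = g}, and let f⁺ denote the unique minimum-norm element of {f ∈ X : A f = g}. Then f_j⁺ → f⁺ in X as j → ∞. -/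
open Filter Topology RealInnerProductSpace

/-!
The minimum-norm solution `f⁺` is orthogonal to `ker A`, so Pythagoras gives
`‖f_j⁺‖² = ‖f⁺‖² + ‖f_j⁺ - f⁺‖²` and it suffices to show `‖f_j⁺‖ → ‖f⁺‖`. Since `A` maps `X₀`
onto the finite-dimensional `Y`, it has a continuous right inverse `R` with values in `X₀`;
the continuous map `v ↦ v + R (g - A v)` fixes `f⁺` and turns elements of `X_j` into solutions
in `X_j`, so `f⁺` is a limit of solutions in `⋃ X_j`, which forces `limsup ‖f_j⁺‖ ≤ ‖f⁺‖`.
-/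

theorem Submodule.mem_orthogonal_of_forall_norm_le_norm_add {E : Type*} [NormedAddCommGroup E]
    [InnerProductSpace ℝ E] (K : Submodule ℝ E) {x : E} (hx : ∀ k ∈ K, ‖x‖ ≤ ‖x + k‖) :
    x ∈ Kᗮ := by
  have hmin : ‖x - 0‖ = ⨅ w : (K : Set E), ‖x - w‖ :=
    le_antisymm (le_ciInf fun w => by simpa [sub_eq_add_neg] using hx _ (K.neg_mem w.2))
      (ciInf_le (f := fun w : (K : Set E) => ‖x - w‖)
        ⟨0, Set.forall_mem_range.2 fun _ => norm_nonneg _⟩ ⟨0, K.zero_mem⟩)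
  rw [norm_eq_iInf_iff_real_inner_eq_zero K K.zero_mem, sub_zero] at hmin
  exact (K.mem_orthogonal' x).2 hmin

theorem tendsto_of_tendsto_norm_of_inner_sub_eq_zero {E ι : Type*} [NormedAddCommGroup E]
    [InnerProductSpace ℝ E] {l : Filter ι} {u : ι → E} {x : E}
    (hu : Tendsto (fun i => ‖u i‖) l (𝓝 ‖x‖)) (horth : ∀ i, ⟪x, u i - x⟫ = 0) :
    Tendsto u l (𝓝 x) := by
  have hpyth : ∀ i, ‖u i - x‖ = √(‖u i‖ ^ 2 - ‖x‖ ^ 2) := fun i => by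
    have h := norm_add_sq_eq_norm_sq_add_norm_sq_real (horth i)
    rw [add_sub_cancel, ← sq, ← sq, ← sq] at h
    rw [h, add_sub_cancel_left, Real.sqrt_sq (norm_nonneg _)]
  have hlim := ((hu.pow 2).sub_const (‖x‖ ^ 2)).sqrt
  rw [sub_self, Real.sqrt_zero] at hlim
  exact tendsto_iff_norm_sub_tendsto_zero.2 (by simpa only [hpyth] using hlim)

theorem tendsto_norm_of_forall_norm_le_of_mem_closure_iUnion {E ι : Type*}
    [SeminormedAddCommGroup E] [Preorder ι] {S : ι → Set E} (hS : Monotone S) {f : ι → E}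
    (hf : ∀ i, ∀ y ∈ S i, ‖f i‖ ≤ ‖y‖) {x : E} (hx : x ∈ closure (⋃ i, S i))
    (hxf : ∀ i, ‖x‖ ≤ ‖f i‖) : Tendsto (fun i => ‖f i‖) atTop (𝓝 ‖x‖) := by
  refine tendsto_order.2 ⟨fun c hc => .of_forall fun i => hc.trans_le (hxf i), fun c hc => ?_⟩
  obtain ⟨y, hyc, hyS⟩ := mem_closure_iff.1 hx {y | ‖y‖ < c}
    (isOpen_lt continuous_norm continuous_const) hc
  obtain ⟨i₀, hy⟩ := Set.mem_iUnion.1 hyS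
  exact (eventually_ge_atTop i₀).mono fun i hi => (hf i y (hS hi hy)).trans_lt hyc

theorem mem_closure_iUnion_setOf_apply_eq {𝕜 E F ι : Type*} [NontriviallyNormedField 𝕜]
    [CompleteSpace 𝕜] [NormedAddCommGroup E] [NormedSpace 𝕜 E] [NormedAddCommGroup F]
    [NormedSpace 𝕜 F] [FiniteDimensional 𝕜 F] (A : E →L[𝕜] F) {W : Submodule 𝕜 E}
    (hW : ∀ y, ∃ w ∈ W, A w = y) {V : ι → Submodule 𝕜 E} (hWV : ∀ i, W ≤ V i) {x : E}
    (hx : x ∈ closure (⋃ i, (V i : Set E))) :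
    x ∈ closure (⋃ i, {f | f ∈ V i ∧ A f = A x}) := by
  obtain ⟨R, hR⟩ := (A.comp W.subtypeL).exists_rightInverse_of_surjective
    (LinearMap.range_eq_top.2 fun y => by simpa using hW y)
  have hAR : ∀ y, A (R y) = y := fun y => congr($hR y)
  have hcorr : Set.MapsTo (fun v => v + W.subtypeL (R (A x - A v))) (⋃ i, (V i : Set E))
      (⋃ i, {f | f ∈ V i ∧ A f = A x}) := fun v hv => by
    obtain ⟨i, hvi⟩ := Set.mem_iUnion.1 hv
    exact Set.mem_iUnion.2 ⟨i, (V i).add_mem hvi (hWV i (R _).2), by simp [hAR]⟩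
  simpa using map_mem_closure (by fun_prop) hx hcorr

theorem generalized_inverses_converge_general
    {X Y : Type*} [NormedAddCommGroup X] [InnerProductSpace ℝ X]
    [NormedAddCommGroup Y] [InnerProductSpace ℝ Y] [FiniteDimensional ℝ Y]
    (A : X →L[ℝ] Y)
    (Xs : ℕ → Submodule ℝ X) (hmono : ∀ j, Xs j ≤ Xs (j + 1))
    (hdense : (((LinearMap.ker (A : X →ₗ[ℝ] Y))ᗮ : Submodule ℝ X) : Set X) ⊆ closure (⋃ j, (Xs j : Set X)))
    (hsurj : ∀ j, ∀ y : Y, ∃ v ∈ Xs j, A v = y)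
    (g : Y)
    (fj : ℕ → X) (hfjsol : ∀ j, A (fj j) = g)
    (hfjmin : ∀ j, ∀ f ∈ Xs j, A f = g → ‖fj j‖ ≤ ‖f‖)
    (fplus : X) (hfplussol : A fplus = g)
    (hfplusmin : ∀ f : X, A f = g → ‖fplus‖ ≤ ‖f‖) :
    Tendsto fj atTop (nhds fplus) := by
  have hXs : Monotone Xs := monotone_nat_of_le_succ hmono
  have hfplus : fplus ∈ (LinearMap.ker (A : X →ₗ[ℝ] Y))ᗮ :=
    Submodule.mem_orthogonal_of_forall_norm_le_norm_add _ fun k hk =>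
      hfplusmin _ (by simpa [hfplussol] using hk)
  have hsol : fplus ∈ closure (⋃ j, {f | f ∈ Xs j ∧ A f = g}) :=
    hfplussol ▸ mem_closure_iUnion_setOf_apply_eq A (hsurj 0)
      (fun j => hXs j.zero_le) (hdense hfplus)
  have hnorm : Tendsto (fun j => ‖fj j‖) atTop (𝓝 ‖fplus‖) :=
    tendsto_norm_of_forall_norm_le_of_mem_closure_iUnion (S := fun j => {f | f ∈ Xs j ∧ A f = g})
      (fun _ _ hij _ h => ⟨hXs hij h.1, h.2⟩)
      (fun j f hf => hfjmin j f hf.1 hf.2) hsol fun j => hfplusmin _ (hfjsol j)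
  exact tendsto_of_tendsto_norm_of_inner_sub_eq_zero hnorm fun j =>
    Submodule.inner_left_of_mem_orthogonal (by simp [hfjsol, hfplussol]) hfplus

/-- Let `A : X →L[ℝ] Y` be bounded linear from a real Hilbert space `X`
to a finite-dimensional real Hilbert space `Y`, `(Xs j)` nested closed subspaces with
`(ker A)ᗮ ⊆ closure (⋃ j, Xs j)` and with each restriction of `A` to `Xs j` surjective.
For `g ∈ Y`, the minimum-norm solutions `fj j` of `A f = g` over `Xs j` converge to the
minimum-norm solution `fplus` of `A f = g` over `X`. -/
theorem generalized_inverses_converge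
    {X Y : Type*} [NormedAddCommGroup X] [InnerProductSpace ℝ X] [CompleteSpace X]
    [NormedAddCommGroup Y] [InnerProductSpace ℝ Y] [FiniteDimensional ℝ Y]
    (A : X →L[ℝ] Y)
    (Xs : ℕ → Submodule ℝ X) (hmono : ∀ j, Xs j ≤ Xs (j + 1))
    (hclosed : ∀ j, IsClosed (Xs j : Set X))
    (hdense : (((LinearMap.ker (A : X →ₗ[ℝ] Y))ᗮ : Submodule ℝ X) : Set X) ⊆ closure (⋃ j, (Xs j : Set X)))
    (hsurj : ∀ j, ∀ y : Y, ∃ v ∈ Xs j, A v = y)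
    (g : Y)
    (fj : ℕ → X) (hfjmem : ∀ j, fj j ∈ Xs j) (hfjsol : ∀ j, A (fj j) = g)
    (hfjmin : ∀ j, ∀ f ∈ Xs j, A f = g → ‖fj j‖ ≤ ‖f‖)
    (fplus : X) (hfplussol : A fplus = g)
    (hfplusmin : ∀ f : X, A f = g → ‖fplus‖ ≤ ‖f‖) :
    Tendsto fj atTop (nhds fplus) :=
  generalized_inverses_converge_general A Xs hmono hdense hsurj g fj hfjsol hfjmin fplus hfplussol
    hfplusmin
end

section
/- Let X be a real Hilbert space and Y a finite-dimensional real Hilbert space, A : X → Y a bounded linear operator, and (X_j)_{j∈ℕ} a sequence of closed subspaces of X with X_j ⊆ X_{j+1} for all j, with (ker A)^⊥ ⊆ closure(∪_{j∈ℕ} X_j), and such that for every j the restriction of A to X_j is surjective onto Y. Let g ∈ Y and let V denote the closure of ∪_{j∈ℕ} {x ∈ X_j : A x = g} (a nonempty closed affine subset of X). Then for every f ∈ (ker A)^⊥, the metric projections coincide: P_V f = P_{M_A(g)} f, where M_A(g) := {x ∈ X : A x = g}. -/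
/-! The nearest point `q` of `f ∈ (ker A)ᗮ` in the affine set `M = {x | A x = g}` satisfies
`f - q ⊥ ker A`, hence `q ∈ (ker A)ᗮ ⊆ closure (⋃ j, Xs j)`. Surjectivity of `A` on `Xs 0`
gives a continuous right inverse `C : Y → Xs 0`, and the continuous map `x ↦ x + C (g - A x)`
sends `⋃ j, Xs j` into `⋃ j, {x ∈ Xs j | A x = g}` while fixing `q`; so `q ∈ V`. As `V ⊆ M`,
`p` is then a nearest point of `f` in the convex set `M` as well, and nearest points in convex
sets are unique. -/

open Set

section NearestPoint

variable {E : Type*} [NormedAddCommGroup E] [InnerProductSpace ℝ E]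

theorem real_inner_sub_sub_nonpos_of_forall_norm_sub_le {K : Set E} (hK : Convex ℝ K)
    {f p : E} (hp : p ∈ K) (hmin : ∀ z ∈ K, ‖f - p‖ ≤ ‖f - z‖) :
    ∀ z ∈ K, inner ℝ (f - p) (z - p) ≤ 0 := by
  have : Nonempty K := ⟨⟨p, hp⟩⟩
  have hbdd : BddBelow (range fun z : K => ‖f - z‖) := ⟨0, by rintro _ ⟨z, rfl⟩; positivity⟩
  refine (norm_eq_iInf_iff_real_inner_le_zero hK hp).mp (le_antisymm ?_ ?_)
  · exact le_ciInf fun z => hmin z z.2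
  · exact ciInf_le hbdd ⟨p, hp⟩

theorem eq_of_forall_norm_sub_le_of_convex {K : Set E} (hK : Convex ℝ K) {f p q : E}
    (hp : p ∈ K) (hq : q ∈ K) (hpmin : ∀ z ∈ K, ‖f - p‖ ≤ ‖f - z‖)
    (hqmin : ∀ z ∈ K, ‖f - q‖ ≤ ‖f - z‖) : p = q := by
  have hpq := real_inner_sub_sub_nonpos_of_forall_norm_sub_le hK hp hpmin q hq
  have hqp := real_inner_sub_sub_nonpos_of_forall_norm_sub_le hK hq hqmin p hp
  have hsum : inner ℝ (f - p) (q - p) + inner ℝ (f - q) (p - q) = ‖q - p‖ ^ 2 := by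
    rw [← real_inner_self_eq_norm_sq, ← neg_sub q p, inner_neg_right, ← sub_eq_add_neg,
      ← inner_sub_left, sub_sub_sub_cancel_left]
  have hnorm : ‖q - p‖ = 0 := (sq_nonpos_iff _).mp (hsum ▸ add_nonpos hpq hqp)
  exact (sub_eq_zero.mp (norm_eq_zero.mp hnorm)).symm

theorem mem_orthogonal_ker_of_forall_norm_sub_le {F : Type*} [AddCommGroup F] [Module ℝ F]
    {A : E →ₗ[ℝ] F} {f q : E} {g : F} (hf : f ∈ (LinearMap.ker A)ᗮ) (hq : A q = g)
    (hmin : ∀ z, A z = g → ‖f - q‖ ≤ ‖f - z‖) : q ∈ (LinearMap.ker A)ᗮ := by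
  have hconv : Convex ℝ {x | A x = g} := (convex_singleton g).linear_preimage A
  have hinner := real_inner_sub_sub_nonpos_of_forall_norm_sub_le hconv hq hmin
  have hfq : f - q ∈ (LinearMap.ker A)ᗮ := by
    refine (Submodule.mem_orthogonal' _ _).mpr fun w hw => le_antisymm ?_ ?_
    · simpa using hinner (q + w) (by simp [LinearMap.mem_ker.mp hw, hq])
    · simpa using hinner (q - w) (by simp [LinearMap.mem_ker.mp hw, hq])
  simpa using Submodule.sub_mem _ hf hfq

end NearestPoint

theorem ContinuousLinearMap.exists_rightInverse_mem_of_forall_exists_mem {𝕜 X Y : Type*}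
    [NontriviallyNormedField 𝕜] [CompleteSpace 𝕜] [AddCommGroup X] [Module 𝕜 X]
    [TopologicalSpace X] [IsTopologicalAddGroup X] [ContinuousSMul 𝕜 X]
    [AddCommGroup Y] [Module 𝕜 Y] [TopologicalSpace Y] [IsTopologicalAddGroup Y]
    [ContinuousSMul 𝕜 Y] [T2Space Y] [FiniteDimensional 𝕜 Y]
    (A : X →L[𝕜] Y) (S : Submodule 𝕜 X) (hS : ∀ y, ∃ v ∈ S, A v = y) :
    ∃ C : Y →L[𝕜] X, (∀ y, A (C y) = y) ∧ ∀ y, C y ∈ S := by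
  obtain ⟨C, hC⟩ := (A.comp S.subtypeL).exists_rightInverse_of_surjective <|
    LinearMap.range_eq_top.mpr fun y => by
      obtain ⟨v, hv, rfl⟩ := hS y
      exact ⟨⟨v, hv⟩, rfl⟩
  exact ⟨S.subtypeL.comp C, fun y => congr($hC y), fun y => (C y).2⟩

theorem mem_closure_iUnion_solutions_of_rightInverse {ι X Y : Type*} [AddCommGroup X]
    [Module ℝ X] [TopologicalSpace X] [IsTopologicalAddGroup X] [AddCommGroup Y] [Module ℝ Y]
    [TopologicalSpace Y] [IsTopologicalAddGroup Y] {A : X →L[ℝ] Y} {Xs : ι → Submodule ℝ X}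
    (C : Y →L[ℝ] X) (hAC : ∀ y, A (C y) = y) (hC : ∀ y j, C y ∈ Xs j) {g : Y} {a : X}
    (ha : a ∈ closure (⋃ j, (Xs j : Set X))) (hAa : A a = g) :
    a ∈ closure (⋃ j, {x : X | x ∈ Xs j ∧ A x = g}) := by
  have hcont : Continuous fun u => u + C (g - A u) := by fun_prop
  have hmaps : MapsTo (fun u => u + C (g - A u)) (⋃ j, (Xs j : Set X))
      (⋃ j, {x : X | x ∈ Xs j ∧ A x = g}) := by
    intro u hu
    obtain ⟨j, hj⟩ := mem_iUnion.mp hu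
    exact mem_iUnion.mpr ⟨j, (Xs j).add_mem hj (hC _ j), by simp [hAC]⟩
  simpa [hAa] using map_mem_closure hcont ha hmaps

theorem projection_onto_closure_union_eq_projection_onto_solution_set_general
    {X Y : Type*} [NormedAddCommGroup X] [InnerProductSpace ℝ X]
    [NormedAddCommGroup Y] [InnerProductSpace ℝ Y] [FiniteDimensional ℝ Y]
    (A : X →L[ℝ] Y)
    (Xs : ℕ → Submodule ℝ X) (hmono : ∀ j, Xs j ≤ Xs (j + 1))
    (hdense : ((LinearMap.ker (A : X →ₗ[ℝ] Y))ᗮ : Set X) ⊆ closure (⋃ j, (Xs j : Set X)))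
    (hsurj : ∀ j, ∀ y : Y, ∃ v ∈ Xs j, A v = y)
    (g : Y)
    (V : Set X) (hV : V = closure (⋃ j, {x : X | x ∈ Xs j ∧ A x = g}))
    (f : X) (hf : f ∈ (LinearMap.ker (A : X →ₗ[ℝ] Y))ᗮ)
    (p : X) (hpV : p ∈ V) (hpproj : ∀ z ∈ V, ‖f - p‖ ≤ ‖f - z‖)
    (q : X) (hqsol : A q = g) (hqproj : ∀ z : X, A z = g → ‖f - q‖ ≤ ‖f - z‖) :
    p = q := by
  have hVsol : V ⊆ {x | A x = g} := hV ▸ closure_minimal (iUnion_subset fun _ _ hx => hx.2)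
    (isClosed_eq A.continuous continuous_const)
  have hq_perp : q ∈ (LinearMap.ker (A : X →ₗ[ℝ] Y))ᗮ :=
    mem_orthogonal_ker_of_forall_norm_sub_le hf hqsol hqproj
  obtain ⟨C, hAC, hC⟩ := A.exists_rightInverse_mem_of_forall_exists_mem (Xs 0) (hsurj 0)
  have hqV : q ∈ V := hV ▸ mem_closure_iUnion_solutions_of_rightInverse C hAC
    (fun y j => monotone_nat_of_le_succ hmono (Nat.zero_le j) (hC y)) (hdense hq_perp) hqsol
  have hp_min : ∀ z, A z = g → ‖f - p‖ ≤ ‖f - z‖ :=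
    fun z hz => (hpproj q hqV).trans (hqproj z hz)
  have hconv : Convex ℝ {x | A x = g} := (convex_singleton g).linear_preimage (A : X →ₗ[ℝ] Y)
  exact eq_of_forall_norm_sub_le_of_convex hconv (hVsol hpV) hqsol hp_min hqproj

/-- In the setting of nested closed subspaces `(Xs j)` of a real Hilbert
space `X`, a bounded linear `A : X →L[ℝ] Y` onto a finite-dimensional `Y` whose
restrictions to each `Xs j` are surjective, and `(ker A)ᗮ ⊆ closure (⋃ j, Xs j)`: for
`V := closure (⋃ j, {x ∈ Xs j : A x = g})` and every `f ∈ (ker A)ᗮ`, the metric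
projection `p` of `f` onto `V` coincides with the metric projection `q` of `f` onto the
solution set `M_A(g) = {x : A x = g}`. -/
theorem projection_onto_closure_union_eq_projection_onto_solution_set
    {X Y : Type*} [NormedAddCommGroup X] [InnerProductSpace ℝ X] [CompleteSpace X]
    [NormedAddCommGroup Y] [InnerProductSpace ℝ Y] [FiniteDimensional ℝ Y]
    (A : X →L[ℝ] Y)
    (Xs : ℕ → Submodule ℝ X) (hmono : ∀ j, Xs j ≤ Xs (j + 1))
    (hclosed : ∀ j, IsClosed (Xs j : Set X))
    (hdense : ((LinearMap.ker (A : X →ₗ[ℝ] Y))ᗮ : Set X) ⊆ closure (⋃ j, (Xs j : Set X)))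
    (hsurj : ∀ j, ∀ y : Y, ∃ v ∈ Xs j, A v = y)
    (g : Y)
    (V : Set X) (hV : V = closure (⋃ j, {x : X | x ∈ Xs j ∧ A x = g}))
    (f : X) (hf : f ∈ (LinearMap.ker (A : X →ₗ[ℝ] Y))ᗮ)
    (p : X) (hpV : p ∈ V) (hpproj : ∀ z ∈ V, ‖f - p‖ ≤ ‖f - z‖)
    (q : X) (hqsol : A q = g) (hqproj : ∀ z : X, A z = g → ‖f - q‖ ≤ ‖f - z‖) :
    p = q :=
  projection_onto_closure_union_eq_projection_onto_solution_set_general A Xs hmono hdense hsurj g V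
    hV f hf p hpV hpproj q hqsol hqproj
end

section
/- Let X be a real Hilbert space and Y a real Hilbert space, A : X → Y a bounded linear operator, and (X_j)_{j∈ℕ} a sequence of closed subspaces of X with X_j ⊆ X_{j+1} for all j and (ker A)^⊥ ⊆ closure(∪_{j∈ℕ} X_j). Let g ∈ Y, ρ' > 0, and let (η_l)_{l∈ℕ}, (δ_l)_{l∈ℕ} be nonnegative null sequences and (j_l)_{l∈ℕ} a sequence in ℕ with j_l → ∞. For each l, let B_l : X → Y be a bounded linear operator with ‖B_l − A‖ ≤ η_l and g_l ∈ Y with ‖g_l − g‖ ≤ δ_l. Let x_l ∈ X_{j_l} with x_l → x in X. Then, as l → ∞: (i) w_l := B_l x_l − g_l → w := A x − g in Y; (ii) u_l := P_{X_{j_l}}(B_l* w_l) → A* w in X; (iii) ⟪w_l, g_l⟫ → ⟪w, g⟫; and (iv) (ρ' η_l + δ_l)‖w_l‖ → 0. -/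
/-!
Since `‖B l - A‖ ≤ η l → 0` and `‖gl l - g‖ ≤ δ l → 0`, everything except the projected term
follows from joint continuity of operator application, the adjoint and the inner product.
For the projected term, `A* w` lies in `(ker A)ᗮ = closure (range A*)`, hence in the closure of
`⋃ Xs i`; there the projections onto the increasing `Xs (j l)` converge strongly to the identity,
and since they are contractions this survives replacing the fixed vector `A* w` by the
convergent sequence `B l* w l`.
-/

open Filter Topology
open scoped RealInnerProductSpace

theorem Filter.Tendsto.clm_apply {𝕜 E F α : Type*} [NontriviallyNormedField 𝕜]
    [SeminormedAddCommGroup E] [NormedSpace 𝕜 E] [SeminormedAddCommGroup F] [NormedSpace 𝕜 F]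
    {l : Filter α} {T : α → E →L[𝕜] F} {T₀ : E →L[𝕜] F} {v : α → E} {v₀ : E}
    (hT : Tendsto T l (𝓝 T₀)) (hv : Tendsto v l (𝓝 v₀)) :
    Tendsto (fun t => T t (v t)) l (𝓝 (T₀ v₀)) :=
  (isBoundedBilinearMap_apply.continuous.tendsto (T₀, v₀)).comp (hT.prodMk_nhds hv)

theorem Submodule.tendsto_starProjection_of_mem_closure_iUnion {𝕜 E ι α : Type*} [RCLike 𝕜]
    [NormedAddCommGroup E] [InnerProductSpace 𝕜 E] [Preorder ι]
    {U : ι → Submodule 𝕜 E} [∀ i, (U i).HasOrthogonalProjection]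
    [(⨆ i, U i).topologicalClosure.HasOrthogonalProjection] (hU : Monotone U)
    {z : E} (hz : z ∈ closure (⋃ i, (U i : Set E)))
    {l : Filter α} {j : α → ι} (hj : Tendsto j l atTop) {a : α → E} (ha : Tendsto a l (𝓝 z)) :
    Tendsto (fun t => (U (j t)).starProjection (a t)) l (𝓝 z) := by
  have hz_mem : z ∈ (⨆ i, U i).topologicalClosure := by
    rw [← SetLike.mem_coe, Submodule.topologicalClosure_coe]
    exact closure_mono (Set.iUnion_subset fun i => SetLike.coe_subset_coe.2 (le_iSup U i)) hz
  have h_fixed : Tendsto (fun t => (U (j t)).starProjection z) l (𝓝 z) := by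
    have := (Submodule.starProjection_tendsto_closure_iSup U hU z).comp hj
    rwa [Submodule.starProjection_eq_self_iff.2 hz_mem] at this
  have h_diff : Tendsto (fun t => (U (j t)).starProjection (a t - z)) l (𝓝 0) := by
    refine squeeze_zero_norm (fun t => Submodule.norm_starProjection_apply_le _ _) ?_
    exact tendsto_iff_norm_sub_tendsto_zero.1 ha
  simpa [map_sub] using h_diff.add h_fixed

theorem ContinuousLinearMap.adjoint_apply_mem_orthogonal_ker {𝕜 E F : Type*} [RCLike 𝕜]
    [NormedAddCommGroup E] [InnerProductSpace 𝕜 E] [CompleteSpace E]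
    [NormedAddCommGroup F] [InnerProductSpace 𝕜 F] [CompleteSpace F]
    (T : E →L[𝕜] F) (y : F) : T.adjoint y ∈ (LinearMap.ker (T : E →ₗ[𝕜] F))ᗮ :=
  T.orthogonal_ker ▸ Submodule.le_topologicalClosure _ (LinearMap.mem_range_self _ y)

theorem resesop_auxiliary_quantities_converge_general
    {X Y : Type*} [NormedAddCommGroup X] [InnerProductSpace ℝ X] [CompleteSpace X]
    [NormedAddCommGroup Y] [InnerProductSpace ℝ Y] [CompleteSpace Y]
    (A : X →L[ℝ] Y)
    (Xs : ℕ → Submodule ℝ X) [∀ i, CompleteSpace (Xs i)]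
    (hmono : ∀ i, Xs i ≤ Xs (i + 1))
    (hdense : ((LinearMap.ker (A : X →ₗ[ℝ] Y))ᗮ : Set X) ⊆ closure (⋃ i, (Xs i : Set X)))
    (g : Y) (ρ' : ℝ)
    (η δ : ℕ → ℝ)
    (hηlim : Tendsto η atTop (nhds 0)) (hδlim : Tendsto δ atTop (nhds 0))
    (j : ℕ → ℕ) (hj : Tendsto j atTop atTop)
    (B : ℕ → X →L[ℝ] Y) (hB : ∀ l, ‖B l - A‖ ≤ η l)
    (gl : ℕ → Y) (hgl : ∀ l, ‖gl l - g‖ ≤ δ l)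
    (x : ℕ → X)
    (xlim : X) (hx : Tendsto x atTop (nhds xlim)) :
    Tendsto (fun l => B l (x l) - gl l) atTop (nhds (A xlim - g)) ∧
    Tendsto
      (fun l => (Submodule.orthogonalProjectionOnto (Xs (j l)) ((B l).adjoint (B l (x l) - gl l)) : X))
      atTop (nhds (A.adjoint (A xlim - g))) ∧
    Tendsto (fun l => ⟪B l (x l) - gl l, gl l⟫) atTop (nhds ⟪A xlim - g, g⟫) ∧
    Tendsto (fun l => (ρ' * η l + δ l) * ‖B l (x l) - gl l‖) atTop (nhds 0) := by
  have hB_tendsto : Tendsto B atTop (𝓝 A) :=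
    tendsto_iff_norm_sub_tendsto_zero.2 (squeeze_zero (fun _ => norm_nonneg _) hB hηlim)
  have hgl_tendsto : Tendsto gl atTop (𝓝 g) :=
    tendsto_iff_norm_sub_tendsto_zero.2 (squeeze_zero (fun _ => norm_nonneg _) hgl hδlim)
  have hw : Tendsto (fun l => B l (x l) - gl l) atTop (𝓝 (A xlim - g)) :=
    (hB_tendsto.clm_apply hx).sub hgl_tendsto
  have hadj : Tendsto (fun l => (B l).adjoint (B l (x l) - gl l)) atTop
      (𝓝 (A.adjoint (A xlim - g))) :=
    ((ContinuousLinearMap.adjoint.continuous.tendsto A).comp hB_tendsto).clm_apply hw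
  refine ⟨hw, ?_, hw.inner hgl_tendsto, ?_⟩
  · simpa only [Submodule.starProjection_apply] using
      Submodule.tendsto_starProjection_of_mem_closure_iUnion (monotone_nat_of_le_succ hmono)
        (hdense (A.adjoint_apply_mem_orthogonal_ker _)) hj hadj
  · simpa using ((hηlim.const_mul ρ').add hδlim).mul hw.norm

/-- In the RESESOP setting with nested closed subspaces `(Xs i)` of the
real Hilbert space `X`, `(ker A)ᗮ ⊆ closure (⋃ i, Xs i)`, null sequences `η, δ ≥ 0`,
`j l → ∞`, perturbed operators `‖B l - A‖ ≤ η l`, perturbed data `‖gl l - g‖ ≤ δ l` and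
points `x l ∈ Xs (j l)` with `x l → xlim`, the auxiliary quantities converge:
`w l := B l (x l) - gl l → A xlim - g`, `u l := P_{Xs (j l)} ((B l)* (w l)) → A* (A xlim - g)`,
`⟪w l, gl l⟫ → ⟪A xlim - g, g⟫` and `(ρ' η l + δ l)‖w l‖ → 0`. -/
theorem resesop_auxiliary_quantities_converge
    {X Y : Type*} [NormedAddCommGroup X] [InnerProductSpace ℝ X] [CompleteSpace X]
    [NormedAddCommGroup Y] [InnerProductSpace ℝ Y] [CompleteSpace Y]
    (A : X →L[ℝ] Y)
    (Xs : ℕ → Submodule ℝ X) [∀ i, CompleteSpace (Xs i)]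
    (hmono : ∀ i, Xs i ≤ Xs (i + 1))
    (hdense : ((LinearMap.ker (A : X →ₗ[ℝ] Y))ᗮ : Set X) ⊆ closure (⋃ i, (Xs i : Set X)))
    (g : Y) (ρ' : ℝ) (hρ' : 0 < ρ')
    (η δ : ℕ → ℝ) (hη0 : ∀ l, 0 ≤ η l) (hδ0 : ∀ l, 0 ≤ δ l)
    (hηlim : Tendsto η atTop (nhds 0)) (hδlim : Tendsto δ atTop (nhds 0))
    (j : ℕ → ℕ) (hj : Tendsto j atTop atTop)
    (B : ℕ → X →L[ℝ] Y) (hB : ∀ l, ‖B l - A‖ ≤ η l)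
    (gl : ℕ → Y) (hgl : ∀ l, ‖gl l - g‖ ≤ δ l)
    (x : ℕ → X) (hxmem : ∀ l, x l ∈ Xs (j l))
    (xlim : X) (hx : Tendsto x atTop (nhds xlim)) :
    Tendsto (fun l => B l (x l) - gl l) atTop (nhds (A xlim - g)) ∧
    Tendsto
      (fun l => (Submodule.orthogonalProjectionOnto (Xs (j l)) ((B l).adjoint (B l (x l) - gl l)) : X))
      atTop (nhds (A.adjoint (A xlim - g))) ∧
    Tendsto (fun l => ⟪B l (x l) - gl l, gl l⟫) atTop (nhds ⟪A xlim - g, g⟫) ∧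
    Tendsto (fun l => (ρ' * η l + δ l) * ‖B l (x l) - gl l‖) atTop (nhds 0) :=
  resesop_auxiliary_quantities_converge_general A Xs hmono hdense g ρ' η δ hηlim hδlim j hj B hB gl
    hgl x xlim hx
end

section
/- Let X be a real Hilbert space and Y a finite-dimensional real Hilbert space, A : X → Y a bounded linear operator, and (X_j)_{j∈ℕ} a sequence of closed subspaces of X with X_j ⊆ X_{j+1} for all j, with (ker A)^⊥ ⊆ closure(∪_{j∈ℕ} X_j), and such that the restriction of A to each X_j is surjective onto Y. Let g ∈ Y, suppose A f = g has a solution of norm at most ρ' in X₀, fix τ > 1, and let (η_l, δ_l) be nonnegative null sequences with (η_l, δ_l) ≠ (0,0) for all l, and j_l → ∞ in ℕ; for each l let B_l : X → Y be bounded linear with ‖B_l − A‖ ≤ η_l and g_l ∈ Y with ‖g_l − g‖ ≤ δ_l. For each l define the RESESOP iterates (f_n^l)_{n∈ℕ} in X_{j_l} by: f_0^l ∈ X_{j_l} with ‖f_0^l‖ ≤ ρ' and f_0^l orthogonal (within X_{j_l}) to ker A ∩ X_{j_l}; and, given f_n^l, set w_n^l := B_l f_n^l − g_l; if ‖w_n^l‖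 ≤ τ(ρ' η_l + δ_l) set f_{n+1}^l := f_n^l, otherwise set u_n^l := P_{X_{j_l}}(B_l* w_n^l), α_n^l := ⟪w_n^l, g_l⟫, ξ_n^l := (ρ' η_l + δ_l)‖w_n^l‖, t_n^l := (⟪u_n^l, f_n^l⟫ − (α_n^l + ξ_n^l))/‖u_n^l‖², and f_{n+1}^l := f_n^l − t_n^l u_n^l. Define the exact SESOP iterates (f_n)_{n∈ℕ} in X starting from some f_0 ∈ (ker A)^⊥ with ‖f_0‖ ≤ ρ' by: given f_n, set w_n := A f_n − g; if w_n = 0 set f_{n+1} := f_n, otherwise u_n := A* w_n, t_n := (⟪u_n, f_n⟫ − ⟪w_n, g⟫)/‖u_n‖², f_{n+1} := f_n − t_n u_n. Assume f_0^l → f_0 in X, assume the step sizes t_n^l and t_n are uniformly bounded over all n and l, and for each l let n_*(l) := min{n ∈ ℕ : ‖B_l f_n^l − g_l‖ ≤ τ(ρ' η_l + δ_l)}, assumed finite for every l. Then lim_{l→∞} f_{n_*(l)}^l = P_{M_A(g)} f_0, the metric projection of f_0 onto the solution set M_A(g) := {x ∈ X : A x = g}, which is the minimum-norm solution of A f = g.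 -/
/-!
Every SESOP step is the metric projection onto a half-space that contains the solution set, so
`‖A‖² ‖fex n - q‖²` drops by at least `‖A fex n - g‖²` per step. The exact iterates stay in
`(ker A)ᗮ`, on which `A` is bounded below by the open mapping theorem, hence they converge to `q`,
the unique solution in `(ker A)ᗮ`. For fixed `n` each RESESOP step depends continuously on the
data, and is eventually active exactly when `A fex n ≠ g`, so `f l n → fex n`. Before stopping,
RESESOP steps are projections onto stripes containing every solution in `X_{j l}` of norm
`≤ ρ'`, so the distance to such solutions only decreases; approximating `q` by them and
comparing at a large fixed index gives the convergence of the stopped outputs.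
-/

open Filter Topology
open scoped RealInnerProductSpace

section

variable {X Y : Type*} [NormedAddCommGroup X] [InnerProductSpace ℝ X]

namespace Submodule

theorem mem_orthogonal_of_forall_norm_le_norm_sub {K : Submodule ℝ X} {x : X}
    (h : ∀ k ∈ K, ‖x‖ ≤ ‖x - k‖) : x ∈ Kᗮ := by
  have hmin : ‖x - 0‖ = ⨅ k : K, ‖x - k‖ :=
    le_antisymm (le_ciInf fun k => by simpa using h k k.2)
      (ciInf_le ⟨0, Set.forall_mem_range.2 fun _ => norm_nonneg _⟩ (0 : K))
  rw [mem_orthogonal']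
  simpa using (K.norm_eq_iInf_iff_real_inner_eq_zero K.zero_mem).1 hmin

end Submodule

namespace ContinuousLinearMap

variable [NormedAddCommGroup Y] [InnerProductSpace ℝ Y] (A : X →L[ℝ] Y)

local notation "K" => (LinearMap.ker (A : X →ₗ[ℝ] Y))ᗮ

theorem mem_orthogonal_ker_of_forall_norm_sub_le {x q : X} (hx : x ∈ K)
    (hq : ∀ z, A z = A q → ‖x - q‖ ≤ ‖x - z‖) : q ∈ K := by
  have hxq : x - q ∈ K := Submodule.mem_orthogonal_of_forall_norm_le_norm_sub fun k hk => by
    simpa [sub_sub] using hq (q + k) (by simpa using hk)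
  simpa using sub_mem hx hxq

theorem norm_sq_eq_add_norm_sub_sq_of_mem_orthogonal_ker {q z : X} (hq : q ∈ K)
    (hz : A z = A q) : ‖z‖ ^ 2 = ‖q‖ ^ 2 + ‖z - q‖ ^ 2 := by
  have hk : z - q ∈ LinearMap.ker (A : X →ₗ[ℝ] Y) := by simp [LinearMap.mem_ker, hz]
  simpa [sq] using norm_add_sq_eq_norm_sq_add_norm_sq_of_inner_eq_zero q (z - q)
    (Submodule.inner_left_of_mem_orthogonal hk hq)

theorem norm_le_of_mem_orthogonal_ker {q z : X} (hq : q ∈ K) (hz : A z = A q) : ‖q‖ ≤ ‖z‖ :=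
  pow_le_pow_iff_left₀ (norm_nonneg _) (norm_nonneg _) two_ne_zero |>.1 <| by
    rw [A.norm_sq_eq_add_norm_sub_sq_of_mem_orthogonal_ker hq hz]
    exact le_add_of_nonneg_right (sq_nonneg _)

theorem eq_of_mem_orthogonal_ker {x y : X} (hx : x ∈ K) (hy : y ∈ K) (h : A x = A y) :
    x = y := by
  have hker : x - y ∈ LinearMap.ker (A : X →ₗ[ℝ] Y) := by simp [LinearMap.mem_ker, h]
  have hbot := Submodule.inf_orthogonal_eq_bot (LinearMap.ker (A : X →ₗ[ℝ] Y))
  exact sub_eq_zero.1 <| (Submodule.mem_bot ℝ).1 <| hbot ▸ ⟨hker, sub_mem hx hy⟩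

theorem exists_norm_le_mul_norm_apply_of_mem_orthogonal_ker [CompleteSpace X] [CompleteSpace Y]
    (hA : Function.Surjective A) : ∃ c, ∀ x ∈ K, ‖x‖ ≤ c * ‖A x‖ := by
  obtain ⟨c, -, hc⟩ := A.exists_preimage_norm_le hA
  refine ⟨c, fun x hx => ?_⟩
  obtain ⟨x', hx', hnorm⟩ := hc (A x)
  exact (A.norm_le_of_mem_orthogonal_ker hx hx').trans hnorm

theorem adjoint_apply_mem_orthogonal_ker_s13 [CompleteSpace X] [CompleteSpace Y] (y : Y) :
    A.adjoint y ∈ K := by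
  rw [Submodule.mem_orthogonal]
  intro x hx
  rw [adjoint_inner_right, show A x = 0 from hx, inner_zero_left]

theorem adjoint_injective_of_surjective [CompleteSpace X] [CompleteSpace Y]
    (hA : Function.Surjective A) : Function.Injective A.adjoint := by
  refine (injective_iff_map_eq_zero _).2 fun y hy => ?_
  obtain ⟨x, rfl⟩ := hA y
  rw [← inner_self_eq_zero (𝕜 := ℝ), ← adjoint_inner_left, hy, inner_zero_left]

end ContinuousLinearMap

theorem norm_sub_smul_sub_sq_add_le {u x z : X} {β t : ℝ} (hz : ⟪u, z⟫ ≤ β)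
    (hx : β < ⟪u, x⟫) (ht : t = (⟪u, x⟫ - β) / ‖u‖ ^ 2) :
    ‖x - t • u - z‖ ^ 2 + t ^ 2 * ‖u‖ ^ 2 ≤ ‖x - z‖ ^ 2 := by
  have hu : u ≠ 0 := by rintro rfl; simp only [inner_zero_left] at hz hx; linarith
  have htu : t * ‖u‖ ^ 2 = ⟪u, x⟫ - β := by
    rw [ht, div_mul_cancel₀ _ (by positivity)]
  have ht0 : 0 ≤ t := by rw [ht]; exact div_nonneg (by linarith) (by positivity)
  have hexpand : ‖x - t • u - z‖ ^ 2 = ‖x - z‖ ^ 2 - 2 * t * ⟪u, x - z⟫ + t ^ 2 * ‖u‖ ^ 2 := by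
    rw [sub_right_comm, norm_sub_sq_real, real_inner_smul_right, real_inner_comm, norm_smul,
      Real.norm_eq_abs, mul_pow, sq_abs]
    ring
  have hinner : t * ‖u‖ ^ 2 ≤ ⟪u, x - z⟫ := by rw [inner_sub_right, htu]; linarith
  nlinarith

theorem tendsto_zero_of_add_le {d e : ℕ → ℝ} (hd : ∀ n, 0 ≤ d n) (he : ∀ n, 0 ≤ e n)
    (h : ∀ n, d (n + 1) + e n ≤ d n) : Tendsto e atTop (𝓝 0) := by
  have hanti : Antitone d := antitone_nat_of_succ_le fun n => by linarith [h n, he n]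
  obtain ⟨L, hL⟩ : ∃ L, Tendsto d atTop (𝓝 L) :=
    ⟨_, tendsto_atTop_ciInf hanti ⟨0, Set.forall_mem_range.2 hd⟩⟩
  have hdiff : Tendsto (fun n => d n - d (n + 1)) atTop (𝓝 0) := by
    simpa using hL.sub (hL.comp (tendsto_add_atTop_nat 1))
  exact squeeze_zero he (fun n => by linarith [h n]) hdiff

section Sesop

variable [NormedAddCommGroup Y] [InnerProductSpace ℝ Y] [CompleteSpace X] [CompleteSpace Y]
  {A : X →L[ℝ] Y} {g : Y}

local notation "K" => (LinearMap.ker (A : X →ₗ[ℝ] Y))ᗮ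

theorem sesop_step_le {x q : X} {w : Y} {u : X} {t : ℝ} (hq : A q = g) (hw : w = A x - g)
    (hu : u = A.adjoint w) (hu0 : u ≠ 0) (ht : t = (⟪u, x⟫ - ⟪w, g⟫) / ‖u‖ ^ 2) :
    ‖A‖ ^ 2 * ‖x - t • u - q‖ ^ 2 + ‖w‖ ^ 2 ≤ ‖A‖ ^ 2 * ‖x - q‖ ^ 2 := by
  have hw0 : w ≠ 0 := by rintro rfl; simp [hu] at hu0
  have huq : ⟪u, q⟫ = ⟪w, g⟫ := by rw [hu, A.adjoint_inner_left, hq]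
  have hux : ⟪u, x⟫ = ‖w‖ ^ 2 + ⟪w, g⟫ := by
    rw [hu, A.adjoint_inner_left, ← real_inner_self_eq_norm_sq, ← inner_add_right, hw,
      sub_add_cancel]
  have hdecr := norm_sub_smul_sub_sq_add_le huq.le
    (by rw [hux]; linarith [norm_pos_iff.2 hw0, pow_pos (norm_pos_iff.2 hw0) 2]) ht
  have htu : t * ‖u‖ ^ 2 = ‖w‖ ^ 2 := by
    rw [ht, hux, add_sub_cancel_right, div_mul_cancel₀ _ (by positivity)]
  have hun : ‖u‖ ≤ ‖A‖ * ‖w‖ := by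
    rw [hu, ← ContinuousLinearMap.adjoint.norm_map A]; exact A.adjoint.le_opNorm w
  have hwA : ‖w‖ ^ 2 ≤ ‖A‖ ^ 2 * (t ^ 2 * ‖u‖ ^ 2) := by
    have hwpos : 0 < ‖w‖ ^ 2 := by positivity
    have h4 : ‖w‖ ^ 2 * ‖w‖ ^ 2 ≤ ‖A‖ ^ 2 * (t ^ 2 * ‖u‖ ^ 2) * ‖w‖ ^ 2 := by
      calc ‖w‖ ^ 2 * ‖w‖ ^ 2 = t ^ 2 * ‖u‖ ^ 2 * ‖u‖ ^ 2 := by rw [← htu]; ring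
        _ ≤ t ^ 2 * ‖u‖ ^ 2 * (‖A‖ * ‖w‖) ^ 2 := by gcongr
        _ = _ := by ring
    exact le_of_mul_le_mul_right h4 hwpos
  nlinarith [sq_nonneg ‖A‖]

variable {fex : ℕ → X} {wex : ℕ → Y} {uex : ℕ → X} {tex : ℕ → ℝ}

theorem sesop_mem_orthogonal_ker (hfex0 : fex 0 ∈ K) (huex : ∀ n, uex n = A.adjoint (wex n))
    (hexstep : ∀ n, (wex n = 0 → fex (n + 1) = fex n) ∧
      (wex n ≠ 0 → fex (n + 1) = fex n - tex n • uex n)) (n : ℕ) : fex n ∈ K := by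
  induction n with
  | zero => exact hfex0
  | succ n ih =>
    by_cases hw : wex n = 0
    · rw [(hexstep n).1 hw]; exact ih
    · rw [(hexstep n).2 hw, huex n]
      exact sub_mem ih (Submodule.smul_mem _ _ (A.adjoint_apply_mem_orthogonal_ker_s13 _))

theorem tendsto_sesop (hA : Function.Surjective A) {q : X} (hq : A q = g) (hqK : q ∈ K)
    (hfexK : ∀ n, fex n ∈ K) (hwex : ∀ n, wex n = A (fex n) - g)
    (huex : ∀ n, uex n = A.adjoint (wex n))
    (htex : ∀ n, tex n = (⟪uex n, fex n⟫ - ⟪wex n, g⟫) / ‖uex n‖ ^ 2)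
    (hexstep : ∀ n, (wex n = 0 → fex (n + 1) = fex n) ∧
      (wex n ≠ 0 → fex (n + 1) = fex n - tex n • uex n)) :
    Tendsto fex atTop (𝓝 q) := by
  have hdecr : ∀ n, ‖A‖ ^ 2 * ‖fex (n + 1) - q‖ ^ 2 + ‖wex n‖ ^ 2 ≤ ‖A‖ ^ 2 * ‖fex n - q‖ ^ 2 := by
    intro n
    by_cases hw : wex n = 0
    · simp [(hexstep n).1 hw, hw]
    · rw [(hexstep n).2 hw]
      refine sesop_step_le hq (hwex n) (huex n) ?_ (htex n)
      rw [huex n]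
      exact (map_ne_zero_iff _ (A.adjoint_injective_of_surjective hA)).2 hw
  have hwsq : Tendsto (fun n => ‖wex n‖ ^ 2) atTop (𝓝 0) :=
    tendsto_zero_of_add_le (d := fun n => ‖A‖ ^ 2 * ‖fex n - q‖ ^ 2)
      (fun n => by positivity) (fun n => by positivity) hdecr
  have hw : Tendsto (fun n => ‖wex n‖) atTop (𝓝 0) := by
    simpa [Real.sqrt_sq (norm_nonneg _)] using hwsq.sqrt
  obtain ⟨c, hc⟩ := A.exists_norm_le_mul_norm_apply_of_mem_orthogonal_ker hA
  have hdist : ∀ n, ‖fex n - q‖ ≤ c * ‖wex n‖ := fun n => by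
    simpa [hwex n, hq] using hc _ (sub_mem (hfexK n) hqK)
  rw [tendsto_iff_norm_sub_tendsto_zero]
  exact squeeze_zero (fun n => norm_nonneg _) hdist (by simpa using hw.const_mul c)

end Sesop

theorem resesop_iterate_mem {V : Submodule ℝ X} {P : ℕ → Prop} {x u : ℕ → X} {t : ℕ → ℝ}
    (hx0 : x 0 ∈ V) (hu : ∀ n, u n ∈ V)
    (hstep : ∀ n, (P n → x (n + 1) = x n) ∧ (¬ P n → x (n + 1) = x n - t n • u n)) (n : ℕ) :
    x n ∈ V := by
  induction n with
  | zero => exact hx0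
  | succ n ih =>
    by_cases hP : P n
    · rw [(hstep n).1 hP]; exact ih
    · rw [(hstep n).2 hP]; exact sub_mem ih (V.smul_mem _ (hu n))

theorem norm_apply_sub_le_of_norm_sub_le [NormedAddCommGroup Y] [NormedSpace ℝ Y]
    {A B : X →L[ℝ] Y} {g g' : Y} {z : X} {ρ η δ : ℝ}
    (hB : ‖B - A‖ ≤ η) (hg : ‖g' - g‖ ≤ δ) (hz : A z = g) (hzρ : ‖z‖ ≤ ρ) :
    ‖B z - g'‖ ≤ ρ * η + δ := by
  have hBz : ‖(B - A) z‖ ≤ ρ * η :=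
    ((B - A).le_opNorm z).trans (by nlinarith [norm_nonneg (B - A), norm_nonneg z])
  calc ‖B z - g'‖ = ‖(B - A) z + (g - g')‖ := by rw [sub_apply, hz]; abel_nf
    _ ≤ ‖(B - A) z‖ + ‖g - g'‖ := norm_add_le _ _
    _ ≤ ρ * η + δ := add_le_add hBz (by rwa [norm_sub_rev])

section Resesop

variable [NormedAddCommGroup Y] [InnerProductSpace ℝ Y] [CompleteSpace X] [CompleteSpace Y]

theorem inner_starProjection_adjoint_apply (V : Submodule ℝ X) [V.HasOrthogonalProjection]
    (B : X →L[ℝ] Y) (w : Y) {x : X} (hx : x ∈ V) :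
    ⟪V.starProjection (B.adjoint w), x⟫ = ⟪w, B x⟫ := by
  rw [Submodule.inner_starProjection_left_eq_right, V.starProjection_eq_self_iff.2 hx,
    B.adjoint_inner_left]

theorem resesop_step_dist_le {V : Submodule ℝ X} [V.HasOrthogonalProjection] {B : X →L[ℝ] Y}
    {g' : Y} {θ t : ℝ} {x z u : X} {w : Y} (hx : x ∈ V) (hz : z ∈ V) (hzθ : ‖B z - g'‖ ≤ θ)
    (hθ : θ < ‖w‖) (hw : w = B x - g') (hu : u = V.starProjection (B.adjoint w))
    (ht : t = (⟪u, x⟫ - (⟪w, g'⟫ + θ * ‖w‖)) / ‖u‖ ^ 2) :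
    ‖x - t • u - z‖ ≤ ‖x - z‖ := by
  have huz : ⟪u, z⟫ ≤ ⟪w, g'⟫ + θ * ‖w‖ := by
    rw [hu, inner_starProjection_adjoint_apply V B w hz, ← add_sub_cancel g' (B z),
      inner_add_right]
    nlinarith [real_inner_le_norm w (B z - g'), norm_nonneg w]
  have hux : ⟪u, x⟫ = ‖w‖ ^ 2 + ⟪w, g'⟫ := by
    rw [hu, inner_starProjection_adjoint_apply V B w hx, ← real_inner_self_eq_norm_sq,
      ← inner_add_right, hw, sub_add_cancel]
  have hsep : ⟪w, g'⟫ + θ * ‖w‖ < ⟪u, x⟫ := by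
    rw [hux]; nlinarith [(norm_nonneg _).trans hzθ]
  have hsq := norm_sub_smul_sub_sq_add_le huz hsep ht
  exact pow_le_pow_iff_left₀ (norm_nonneg _) (norm_nonneg _) two_ne_zero |>.1
    (by nlinarith [sq_nonneg t, sq_nonneg ‖u‖])

theorem resesop_dist_antitone {V : Submodule ℝ X} [V.HasOrthogonalProjection] {B : X →L[ℝ] Y}
    {g' : Y} {θ τ : ℝ} {x u : ℕ → X} {w : ℕ → Y} {t : ℕ → ℝ} {z : X} {N : ℕ} (hτ : 1 ≤ τ)
    (hx0 : x 0 ∈ V) (hz : z ∈ V) (hzθ : ‖B z - g'‖ ≤ θ)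
    (hw : ∀ n, w n = B (x n) - g') (hu : ∀ n, u n = V.starProjection (B.adjoint (w n)))
    (ht : ∀ n, t n = (⟪u n, x n⟫ - (⟪w n, g'⟫ + θ * ‖w n‖)) / ‖u n‖ ^ 2)
    (hstep : ∀ n, (‖w n‖ ≤ τ * θ → x (n + 1) = x n) ∧
      (¬ ‖w n‖ ≤ τ * θ → x (n + 1) = x n - t n • u n))
    (hN : ∀ m < N, ¬ ‖w m‖ ≤ τ * θ) {n : ℕ} (hn : n ≤ N) : ‖x N - z‖ ≤ ‖x n - z‖ := by
  have hθ : 0 ≤ θ := (norm_nonneg _).trans hzθ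
  have hx := resesop_iterate_mem hx0
    (fun n => (hu n).symm ▸ V.starProjection_apply_mem _) hstep
  suffices ∀ m, n ≤ m → m ≤ N → ‖x m - z‖ ≤ ‖x n - z‖ from this N hn le_rfl
  intro m hnm
  induction m, hnm using Nat.le_induction with
  | base => exact fun _ => le_rfl
  | succ m _ ih =>
    intro hm
    have hstop := hN m hm
    rw [(hstep m).2 hstop]
    exact (resesop_step_dist_le (hx m) hz hzθ (by nlinarith) (hw m) (hu m) (ht m)).trans
      (ih (Nat.le_of_succ_le hm))

end Resesop

theorem Filter.Tendsto.clm_apply_s13 [NormedAddCommGroup Y] [NormedSpace ℝ Y] {ι : Type*}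
    {F : Filter ι} {B : ι → X →L[ℝ] Y} {A : X →L[ℝ] Y} {x : ι → X} {a : X}
    (hB : Tendsto B F (𝓝 A)) (hx : Tendsto x F (𝓝 a)) :
    Tendsto (fun i => B i (x i)) F (𝓝 (A a)) :=
  (isBoundedBilinearMap_apply.continuous.tendsto (A, a)).comp (hB.prodMk_nhds hx)

theorem tendsto_starProjection_of_mem_closure_iUnion [CompleteSpace X] {Xs : ℕ → Submodule ℝ X}
    [∀ i, CompleteSpace (Xs i)] (hmono : Monotone Xs) {j : ℕ → ℕ} (hj : Tendsto j atTop atTop)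
    {x : X} (hx : x ∈ closure (⋃ i, (Xs i : Set X))) {y : ℕ → X} (hy : Tendsto y atTop (𝓝 x)) :
    Tendsto (fun l => (Xs (j l)).starProjection (y l)) atTop (𝓝 x) := by
  have hxK : x ∈ (⨆ i, Xs i).topologicalClosure := by
    rwa [← SetLike.mem_coe, Submodule.topologicalClosure_coe,
      Submodule.coe_iSup_of_directed _ hmono.directed_le]
  have hproj : Tendsto (fun l => (Xs (j l)).starProjection x) atTop (𝓝 x) := by
    have := (Submodule.starProjection_tendsto_closure_iSup Xs hmono x).comp hj
    rwa [Submodule.starProjection_eq_self_iff.2 hxK] at this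
  have hdiff : Tendsto (fun l => (Xs (j l)).starProjection (y l - x)) atTop (𝓝 0) :=
    squeeze_zero_norm (fun l => Submodule.norm_starProjection_apply_le _ _)
      (tendsto_iff_norm_sub_tendsto_zero.1 hy)
  simpa using hproj.add hdiff

theorem eventually_lt_norm_of_tendsto [NormedAddCommGroup Y] {ι : Type*} {F : Filter ι}
    {y : ι → Y} {y₀ : Y} {r : ι → ℝ} (hy : Tendsto y F (𝓝 y₀)) (hy₀ : y₀ ≠ 0)
    (hr : Tendsto r F (𝓝 0)) : ∀ᶠ i in F, r i < ‖y i‖ :=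
  (hr.sub hy.norm).eventually_lt_const (by simpa using norm_pos_iff.2 hy₀) |>.mono
    fun _ h => sub_neg.1 h

theorem tendsto_resesop_residual [NormedAddCommGroup Y] [NormedSpace ℝ Y] {A : X →L[ℝ] Y}
    {B : ℕ → X →L[ℝ] Y} {g : Y} {gl : ℕ → Y} {f : ℕ → ℕ → X} {w : ℕ → ℕ → Y} {fex : ℕ → X}
    {wex : ℕ → Y} (hB : Tendsto B atTop (𝓝 A)) (hgl : Tendsto gl atTop (𝓝 g))
    (hw : ∀ l n, w l n = B l (f l n) - gl l) (hwex : ∀ n, wex n = A (fex n) - g) {n : ℕ}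
    (hf : Tendsto (fun l => f l n) atTop (𝓝 (fex n))) :
    Tendsto (fun l => w l n) atTop (𝓝 (wex n)) := by
  simpa only [hw, hwex] using (hB.clm_apply_s13 hf).sub hgl

theorem eventually_stoppingIndex_ne [NormedAddCommGroup Y] {w : ℕ → ℕ → Y} {r : ℕ → ℝ}
    {N : ℕ → ℕ} {n : ℕ} {w₀ : Y} (hN : ∀ l, ‖w l (N l)‖ ≤ r l)
    (hw : Tendsto (fun l => w l n) atTop (𝓝 w₀)) (hw₀ : w₀ ≠ 0) (hr : Tendsto r atTop (𝓝 0)) :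
    ∀ᶠ l in atTop, N l ≠ n := by
  filter_upwards [eventually_lt_norm_of_tendsto hw hw₀ hr] with l hl hNl
  exact not_lt.2 (hNl ▸ hN l) hl

section Stability

variable [CompleteSpace X] [NormedAddCommGroup Y] [InnerProductSpace ℝ Y] [CompleteSpace Y]
  {A : X →L[ℝ] Y} {Xs : ℕ → Submodule ℝ X} [∀ i, CompleteSpace (Xs i)] {j : ℕ → ℕ}
  {B : ℕ → X →L[ℝ] Y} {g : Y} {gl : ℕ → Y} {θ : ℕ → ℝ} {τ C : ℝ}
  {f u : ℕ → ℕ → X} {w : ℕ → ℕ → Y} {t : ℕ → ℕ → ℝ}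
  {fex uex : ℕ → X} {wex : ℕ → Y} {tex : ℕ → ℝ}

theorem tendsto_resesop_iterate (hA : Function.Surjective A) (hmono : Monotone Xs)
    (hdense : ((LinearMap.ker (A : X →ₗ[ℝ] Y))ᗮ : Set X) ⊆ closure (⋃ i, (Xs i : Set X)))
    (hj : Tendsto j atTop atTop) (hB : Tendsto B atTop (𝓝 A)) (hgl : Tendsto gl atTop (𝓝 g))
    (hθ : Tendsto θ atTop (𝓝 0))
    (hw : ∀ l n, w l n = B l (f l n) - gl l)
    (hu : ∀ l n, u l n = (Xs (j l)).starProjection ((B l).adjoint (w l n)))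
    (ht : ∀ l n, t l n = (⟪u l n, f l n⟫ - (⟪w l n, gl l⟫ + θ l * ‖w l n‖)) / ‖u l n‖ ^ 2)
    (hstep : ∀ l n, (‖w l n‖ ≤ τ * θ l → f l (n + 1) = f l n) ∧
      (¬ ‖w l n‖ ≤ τ * θ l → f l (n + 1) = f l n - t l n • u l n))
    (hC : ∀ l n, |t l n| ≤ C)
    (hwex : ∀ n, wex n = A (fex n) - g) (huex : ∀ n, uex n = A.adjoint (wex n))
    (htex : ∀ n, tex n = (⟪uex n, fex n⟫ - ⟪wex n, g⟫) / ‖uex n‖ ^ 2)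
    (hexstep : ∀ n, (wex n = 0 → fex (n + 1) = fex n) ∧
      (wex n ≠ 0 → fex (n + 1) = fex n - tex n • uex n))
    (hstart : Tendsto (fun l => f l 0) atTop (𝓝 (fex 0))) (n : ℕ) :
    Tendsto (fun l => f l n) atTop (𝓝 (fex n)) := by
  induction n with
  | zero => exact hstart
  | succ n ih =>
    have hwlim := tendsto_resesop_residual hB hgl hw hwex ih
    have hulim : Tendsto (fun l => u l n) atTop (𝓝 (uex n)) := by
      simp only [hu, huex]
      exact tendsto_starProjection_of_mem_closure_iUnion hmono hj
        (hdense (A.adjoint_apply_mem_orthogonal_ker_s13 _))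
        (((ContinuousLinearMap.adjoint.continuous.tendsto A).comp hB).clm_apply_s13 hwlim)
    by_cases hw0 : wex n = 0
    · have hincr : Tendsto (fun l => f l (n + 1) - f l n) atTop (𝓝 0) := by
        have hu0 : Tendsto (fun l => ‖u l n‖) atTop (𝓝 0) := by
          simpa [huex, hw0] using hulim.norm
        refine squeeze_zero_norm (fun l => ?_) (by simpa using hu0.const_mul C)
        by_cases hstop : ‖w l n‖ ≤ τ * θ l
        · simpa [(hstep l n).1 hstop] using mul_nonneg ((abs_nonneg _).trans (hC l n))
            (norm_nonneg (u l n))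
        · rw [(hstep l n).2 hstop, sub_sub_cancel_left, norm_neg, norm_smul, Real.norm_eq_abs]
          exact mul_le_mul_of_nonneg_right (hC l n) (norm_nonneg _)
      rw [(hexstep n).1 hw0]
      simpa using ih.add hincr
    · have huex0 : uex n ≠ 0 := by
        rw [huex n]; exact (map_ne_zero_iff _ (A.adjoint_injective_of_surjective hA)).2 hw0
      have htlim : Tendsto (fun l => t l n) atTop (𝓝 (tex n)) := by
        have hpen : Tendsto (fun l => θ l * ‖w l n‖) atTop (𝓝 0) := by
          simpa using hθ.mul hwlim.norm
        simpa only [ht, htex, add_zero, Pi.div_def] using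
          ((hulim.inner ih).sub ((hwlim.inner hgl).add hpen)).div (hulim.norm.pow 2)
            (by positivity)
      have hmove : ∀ᶠ l in atTop, f l n - t l n • u l n = f l (n + 1) :=
        (eventually_lt_norm_of_tendsto hwlim hw0 (by simpa using hθ.const_mul τ)).mono
          fun l hl => ((hstep l n).2 (not_le.2 hl)).symm
      rw [(hexstep n).2 hw0]
      exact (ih.sub (htlim.smul hulim)).congr' hmove

end Stability

theorem mem_closure_iUnion_inter_apply_eq [NormedAddCommGroup Y] [NormedSpace ℝ Y]
    [FiniteDimensional ℝ Y] {A : X →L[ℝ] Y} {Xs : ℕ → Submodule ℝ X} (hmono : Monotone Xs)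
    (hsurj : ∀ y, ∃ v ∈ Xs 0, A v = y) {x : X} (hx : x ∈ closure (⋃ i, (Xs i : Set X))) :
    x ∈ closure ((⋃ i, (Xs i : Set X)) ∩ {z | A z = A x}) := by
  obtain ⟨S, hS⟩ := (A.comp (Xs 0).subtypeL).exists_rightInverse_of_surjective <|
    LinearMap.range_eq_top.2 fun y => by
      obtain ⟨v, hv, rfl⟩ := hsurj y
      exact ⟨⟨v, hv⟩, rfl⟩
  have hAS : ∀ y, A (S y) = y := fun y => congrArg (· y) hS
  -- `x` is the fixed point of the continuous correction `z ↦ z - S (A z - A x)` into the fiber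
  let Φ : X → X := fun z => z - S (A z - A x)
  have hΦ : Continuous Φ := by fun_prop
  have hΦx : Φ x = x := by simp [Φ]
  refine hΦx ▸ map_mem_closure hΦ hx fun z hz => ?_
  obtain ⟨i, hi⟩ := Set.mem_iUnion.1 hz
  refine ⟨Set.mem_iUnion.2 ⟨i, sub_mem hi (hmono (Nat.zero_le i) (S _).2)⟩, ?_⟩
  simp [Φ, hAS]

theorem tendsto_apply_stoppingIndex {E : Type*} [NormedAddCommGroup E] {x : ℕ → ℕ → E}
    {a : ℕ → E} {q : E} {N : ℕ → ℕ} (hx : ∀ n, Tendsto (fun l => x l n) atTop (𝓝 (a n)))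
    (ha : Tendsto a atTop (𝓝 q)) (hstop : ∀ n, a n ≠ q → ∀ᶠ l in atTop, N l ≠ n)
    (hfejer : ∀ ε > 0, ∃ z, ‖z - q‖ < ε ∧
      ∀ᶠ l in atTop, ∀ n ≤ N l, ‖x l (N l) - z‖ ≤ ‖x l n - z‖) :
    Tendsto (fun l => x l (N l)) atTop (𝓝 q) := by
  rw [tendsto_iff_norm_sub_tendsto_zero, Metric.tendsto_nhds]
  intro ε hε
  have hε4 : 0 < ε / 4 := by positivity
  obtain ⟨z, hzq, hz⟩ := hfejer _ hε4
  obtain ⟨m, hmq⟩ := (tendsto_iff_norm_sub_tendsto_zero.1 ha |>.eventually_lt_const hε4).exists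
  have hnear : ∀ n, ∀ᶠ l in atTop, ‖x l n - a n‖ < ε / 4 := fun n =>
    tendsto_iff_norm_sub_tendsto_zero.1 (hx n) |>.eventually_lt_const hε4
  have hearly : ∀ᶠ l in atTop, ∀ n < m, a n = q ∨ N l ≠ n :=
    (Set.finite_lt_nat m).eventually_all.2 fun n _ => by
      by_cases hn : a n = q
      · exact .of_forall fun _ => .inl hn
      · exact (hstop n hn).mono fun _ => .inr
  filter_upwards [hz, hnear m, hearly, (Set.finite_lt_nat m).eventually_all.2 fun n _ => hnear n]
    with l hz hxm hearly hnear'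
  rw [Real.dist_eq, sub_zero, abs_norm]
  rcases lt_or_ge (N l) m with hlt | hge
  · obtain hq | hne := hearly (N l) hlt
    · rw [← hq]; linarith [hnear' (N l) hlt]
    · exact absurd rfl hne
  · calc ‖x l (N l) - q‖ ≤ ‖x l (N l) - z‖ + ‖z - q‖ := norm_sub_le_norm_sub_add_norm_sub _ _ _
      _ ≤ ‖x l m - z‖ + ‖z - q‖ := by gcongr; exact hz m hge
      _ ≤ ‖x l m - a m‖ + ‖a m - q‖ + ‖q - z‖ + ‖z - q‖ := by
        gcongr; simpa only [dist_eq_norm] using dist_triangle4 (x l m) (a m) q z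
      _ < ε := by rw [norm_sub_rev q z]; linarith

theorem exists_mem_apply_eq_norm_le_near [NormedAddCommGroup Y] [InnerProductSpace ℝ Y]
    [FiniteDimensional ℝ Y] {A : X →L[ℝ] Y} {Xs : ℕ → Submodule ℝ X} (hmono : Monotone Xs)
    (hsurj : ∀ y, ∃ v ∈ Xs 0, A v = y) {q z₀ : X} (hqK : q ∈ (LinearMap.ker (A : X →ₗ[ℝ] Y))ᗮ)
    (hq : q ∈ closure (⋃ i, (Xs i : Set X))) (hz₀ : z₀ ∈ Xs 0) (hAz₀ : A z₀ = A q) {ρ ε : ℝ}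
    (hz₀ρ : ‖z₀‖ ≤ ρ) (hε : 0 < ε) : ∃ i, ∃ z ∈ Xs i, A z = A q ∧ ‖z‖ ≤ ρ ∧ ‖z - q‖ < ε := by
  rcases lt_or_ge ‖q‖ ρ with hlt | hge
  · obtain ⟨z, ⟨hzU, hzA⟩, hzq⟩ := Metric.mem_closure_iff.1
      (mem_closure_iUnion_inter_apply_eq hmono hsurj hq) _ (lt_min hε (sub_pos.2 hlt))
    obtain ⟨i, hi⟩ := Set.mem_iUnion.1 hzU
    rw [dist_comm, dist_eq_norm] at hzq
    refine ⟨i, z, hi, hzA, ?_, hzq.trans_le (min_le_left _ _)⟩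
    linarith [norm_le_norm_add_norm_sub' z q, min_le_right ε (ρ - ‖q‖)]
  · -- a solution of norm at most `ρ ≤ ‖q‖` must be the minimum-norm solution `q` itself
    have hpyth := A.norm_sq_eq_add_norm_sub_sq_of_mem_orthogonal_ker hqK hAz₀
    have hz₀q : z₀ = q := by
      rw [← sub_eq_zero, ← norm_eq_zero]
      nlinarith [norm_nonneg z₀, norm_nonneg (z₀ - q)]
    exact ⟨0, z₀, hz₀, hAz₀, hz₀ρ, by simpa [hz₀q] using hε⟩

end

theorem resesop_outputs_converge_to_projection_general
    {X Y : Type*} [NormedAddCommGroup X] [InnerProductSpace ℝ X] [CompleteSpace X]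
    [NormedAddCommGroup Y] [InnerProductSpace ℝ Y] [FiniteDimensional ℝ Y]
    (A : X →L[ℝ] Y)
    (Xs : ℕ → Submodule ℝ X) [∀ i, CompleteSpace (Xs i)]
    (hmono : ∀ i, Xs i ≤ Xs (i + 1))
    (hdense : ((LinearMap.ker (A : X →ₗ[ℝ] Y))ᗮ : Set X) ⊆ closure (⋃ i, (Xs i : Set X)))
    (hsurj : ∀ i, ∀ y : Y, ∃ v ∈ Xs i, A v = y)
    (g : Y) (ρ' τ : ℝ) (hτ : 1 < τ)
    (hsol : ∃ z ∈ Xs 0, A z = g ∧ ‖z‖ ≤ ρ')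
    (η δ : ℕ → ℝ)
    (hηlim : Tendsto η atTop (nhds 0)) (hδlim : Tendsto δ atTop (nhds 0))
    (j : ℕ → ℕ) (hj : Tendsto j atTop atTop)
    (B : ℕ → X →L[ℝ] Y) (hB : ∀ l, ‖B l - A‖ ≤ η l)
    (gl : ℕ → Y) (hgl : ∀ l, ‖gl l - g‖ ≤ δ l)
    -- the RESESOP iterates
    (f : ℕ → ℕ → X)
    (hf0mem : ∀ l, f l 0 ∈ Xs (j l))
    (w : ℕ → ℕ → Y) (hw : ∀ l n, w l n = B l (f l n) - gl l)
    (u : ℕ → ℕ → X)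
    (hu : ∀ l n, u l n = (Submodule.orthogonalProjectionOnto (Xs (j l)) ((B l).adjoint (w l n)) : X))
    (t : ℕ → ℕ → ℝ)
    (ht : ∀ l n, t l n =
      (⟪u l n, f l n⟫ - (⟪w l n, gl l⟫ + (ρ' * η l + δ l) * ‖w l n‖)) / ‖u l n‖ ^ 2)
    (hstep : ∀ l n,
      (‖w l n‖ ≤ τ * (ρ' * η l + δ l) → f l (n + 1) = f l n) ∧
      (¬ ‖w l n‖ ≤ τ * (ρ' * η l + δ l) → f l (n + 1) = f l n - t l n • u l n))
    -- the exact SESOP iterates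
    (fex : ℕ → X) (hfex0 : fex 0 ∈ (LinearMap.ker (A : X →ₗ[ℝ] Y))ᗮ)
    (wex : ℕ → Y) (hwex : ∀ n, wex n = A (fex n) - g)
    (uex : ℕ → X) (huex : ∀ n, uex n = A.adjoint (wex n))
    (tex : ℕ → ℝ)
    (htex : ∀ n, tex n = (⟪uex n, fex n⟫ - ⟪wex n, g⟫) / ‖uex n‖ ^ 2)
    (hexstep : ∀ n,
      (wex n = 0 → fex (n + 1) = fex n) ∧
      (wex n ≠ 0 → fex (n + 1) = fex n - tex n • uex n))
    -- convergence of the start iterates and uniform boundedness of the step sizes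
    (hstart : Tendsto (fun l => f l 0) atTop (nhds (fex 0)))
    (C : ℝ) (hC : ∀ l n, |t l n| ≤ C)
    -- the finite stopping indices
    (nstar : ℕ → ℕ)
    (hnstar : ∀ l, ‖w l (nstar l)‖ ≤ τ * (ρ' * η l + δ l) ∧
      ∀ m < nstar l, ¬ ‖w l m‖ ≤ τ * (ρ' * η l + δ l))
    -- the metric projection of `fex 0` onto the solution set `M_A(g)`
    (q : X) (hqsol : A q = g)
    (hqproj : ∀ z : X, A z = g → ‖fex 0 - q‖ ≤ ‖fex 0 - z‖) :
    Tendsto (fun l => f l (nstar l)) atTop (nhds q) ∧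
      ∀ z : X, A z = g → ‖q‖ ≤ ‖z‖ := by
  obtain ⟨z₀, hz₀, hAz₀, hz₀ρ⟩ := hsol
  have hA : Function.Surjective A := fun y => (hsurj 0 y).imp fun _ h => h.2
  have hmono' : Monotone Xs := monotone_nat_of_le_succ hmono
  have hqK : q ∈ (LinearMap.ker (A : X →ₗ[ℝ] Y))ᗮ :=
    A.mem_orthogonal_ker_of_forall_norm_sub_le hfex0 fun z hz => hqproj z (hz.trans hqsol)
  have hfexK := sesop_mem_orthogonal_ker hfex0 huex hexstep
  have hBA : Tendsto B atTop (𝓝 A) := tendsto_iff_norm_sub_tendsto_zero.2 <|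
    squeeze_zero (fun _ => norm_nonneg _) hB hηlim
  have hglg : Tendsto gl atTop (𝓝 g) := tendsto_iff_norm_sub_tendsto_zero.2 <|
    squeeze_zero (fun _ => norm_nonneg _) hgl hδlim
  have hθ : Tendsto (fun l => ρ' * η l + δ l) atTop (𝓝 0) := by
    simpa using (hηlim.const_mul ρ').add hδlim
  have hconv := tendsto_resesop_iterate hA hmono' hdense hj hBA hglg hθ hw hu ht hstep hC
    hwex huex htex hexstep hstart
  refine ⟨tendsto_apply_stoppingIndex hconv (tendsto_sesop hA hqsol hqK hfexK hwex huex htex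
    hexstep) (fun n hn => ?_) (fun ε hε => ?_),
    fun z hz => A.norm_le_of_mem_orthogonal_ker hqK (hz.trans hqsol.symm)⟩
  · have hw0 : wex n ≠ 0 := fun h => hn <| A.eq_of_mem_orthogonal_ker (hfexK n) hqK <| by
      rw [hqsol, ← sub_eq_zero, ← hwex n, h]
    exact eventually_stoppingIndex_ne (fun l => (hnstar l).1)
      (tendsto_resesop_residual hBA hglg hw hwex (hconv n)) hw0 (by simpa using hθ.const_mul τ)
  · obtain ⟨i, z, hzi, hAz, hzρ, hzq⟩ := exists_mem_apply_eq_norm_le_near hmono' (hsurj 0) hqK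
      (hdense hqK) hz₀ (hAz₀.trans hqsol.symm) hz₀ρ hε
    refine ⟨z, hzq, ?_⟩
    filter_upwards [hj.eventually_ge_atTop i] with l hl n hn
    exact resesop_dist_antitone hτ.le (hf0mem l) (hmono' hl hzi)
      (norm_apply_sub_le_of_norm_sub_le (hB l) (hgl l) (hAz.trans hqsol) hzρ)
      (hw l) (hu l) (ht l) (hstep l) (hnstar l).2 hn

/-- (Regularization property of the fully-discrete RESESOP method.)
In the setting of Statement 12, with moreover `(η l, δ l) ≠ (0,0)` for all `l`, and with
`nstar l` the finite stopping index (the least `n` with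
`‖B l (f l n) - gl l‖ ≤ τ(ρ' η l + δ l)`), the outputs `f l (nstar l)` converge, as
`l → ∞`, to the metric projection `q` of `fex 0` onto the solution set
`M_A(g) = {x : A x = g}`, which is the minimum-norm solution of `A f = g`. -/
theorem resesop_outputs_converge_to_projection
    {X Y : Type*} [NormedAddCommGroup X] [InnerProductSpace ℝ X] [CompleteSpace X]
    [NormedAddCommGroup Y] [InnerProductSpace ℝ Y] [FiniteDimensional ℝ Y]
    (A : X →L[ℝ] Y)
    (Xs : ℕ → Submodule ℝ X) [∀ i, CompleteSpace (Xs i)]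
    (hmono : ∀ i, Xs i ≤ Xs (i + 1))
    (hdense : ((LinearMap.ker (A : X →ₗ[ℝ] Y))ᗮ : Set X) ⊆ closure (⋃ i, (Xs i : Set X)))
    (hsurj : ∀ i, ∀ y : Y, ∃ v ∈ Xs i, A v = y)
    (g : Y) (ρ' τ : ℝ) (hτ : 1 < τ)
    (hsol : ∃ z ∈ Xs 0, A z = g ∧ ‖z‖ ≤ ρ')
    (η δ : ℕ → ℝ) (hη0 : ∀ l, 0 ≤ η l) (hδ0 : ∀ l, 0 ≤ δ l)
    (hηδne : ∀ l, ¬(η l = 0 ∧ δ l = 0))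
    (hηlim : Tendsto η atTop (nhds 0)) (hδlim : Tendsto δ atTop (nhds 0))
    (j : ℕ → ℕ) (hj : Tendsto j atTop atTop)
    (B : ℕ → X →L[ℝ] Y) (hB : ∀ l, ‖B l - A‖ ≤ η l)
    (gl : ℕ → Y) (hgl : ∀ l, ‖gl l - g‖ ≤ δ l)
    -- the RESESOP iterates
    (f : ℕ → ℕ → X)
    (hf0mem : ∀ l, f l 0 ∈ Xs (j l)) (hf0norm : ∀ l, ‖f l 0‖ ≤ ρ')
    (hf0orth : ∀ l, ∀ v : X, v ∈ Xs (j l) → A v = 0 → ⟪f l 0, v⟫ = 0)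
    (w : ℕ → ℕ → Y) (hw : ∀ l n, w l n = B l (f l n) - gl l)
    (u : ℕ → ℕ → X)
    (hu : ∀ l n, u l n = (Submodule.orthogonalProjectionOnto (Xs (j l)) ((B l).adjoint (w l n)) : X))
    (t : ℕ → ℕ → ℝ)
    (ht : ∀ l n, t l n =
      (⟪u l n, f l n⟫ - (⟪w l n, gl l⟫ + (ρ' * η l + δ l) * ‖w l n‖)) / ‖u l n‖ ^ 2)
    (hstep : ∀ l n,
      (‖w l n‖ ≤ τ * (ρ' * η l + δ l) → f l (n + 1) = f l n) ∧
      (¬ ‖w l n‖ ≤ τ * (ρ' * η l + δ l) → f l (n + 1) = f l n - t l n • u l n))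
    -- the exact SESOP iterates
    (fex : ℕ → X) (hfex0 : fex 0 ∈ (LinearMap.ker (A : X →ₗ[ℝ] Y))ᗮ) (hfex0norm : ‖fex 0‖ ≤ ρ')
    (wex : ℕ → Y) (hwex : ∀ n, wex n = A (fex n) - g)
    (uex : ℕ → X) (huex : ∀ n, uex n = A.adjoint (wex n))
    (tex : ℕ → ℝ)
    (htex : ∀ n, tex n = (⟪uex n, fex n⟫ - ⟪wex n, g⟫) / ‖uex n‖ ^ 2)
    (hexstep : ∀ n,
      (wex n = 0 → fex (n + 1) = fex n) ∧
      (wex n ≠ 0 → fex (n + 1) = fex n - tex n • uex n))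
    -- convergence of the start iterates and uniform boundedness of the step sizes
    (hstart : Tendsto (fun l => f l 0) atTop (nhds (fex 0)))
    (C : ℝ) (hC : ∀ l n, |t l n| ≤ C) (hCex : ∀ n, |tex n| ≤ C)
    -- the finite stopping indices
    (nstar : ℕ → ℕ)
    (hnstar : ∀ l, ‖w l (nstar l)‖ ≤ τ * (ρ' * η l + δ l) ∧
      ∀ m < nstar l, ¬ ‖w l m‖ ≤ τ * (ρ' * η l + δ l))
    -- the metric projection of `fex 0` onto the solution set `M_A(g)`
    (q : X) (hqsol : A q = g)
    (hqproj : ∀ z : X, A z = g → ‖fex 0 - q‖ ≤ ‖fex 0 - z‖) :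
    Tendsto (fun l => f l (nstar l)) atTop (nhds q) ∧
      ∀ z : X, A z = g → ‖q‖ ≤ ‖z‖ :=
  resesop_outputs_converge_to_projection_general A Xs hmono hdense hsurj g ρ' τ hτ hsol η δ hηlim
    hδlim j hj B hB gl hgl f hf0mem w hw u hu t ht hstep fex hfex0 wex hwex uex huex tex htex
    hexstep hstart C hC nstar hnstar q hqsol hqproj
end
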